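/- arXiv:1802.03582 — 2 statements merged into one kernel-verified Lean document; each statement's English description precedes it below -/
import Mathlib

section
/- Let L be a linear functional on ℝ[x,y] nonnegative on squares with L(x^{2k}) ≤ L(1)·a^{2k} and L(y^{2k}) ≤ L(1)·b^{2k} for all k ∈ ℕ, where a, b ≥ 0. Then for every n ∈ ℕ, |L((x − y)^n)| ≤ L(1)·(a + b)^n. -/
/-!
Positivity of `L` on squares gives the Cauchy–Schwarz inequality `L(pq)² ≤ L(p²) L(q²)`, so each
mixed moment is bounded by `|L(xᵐ yⁿ⁻ᵐ)| ≤ √(L(x²ᵐ) L(y²⁽ⁿ⁻ᵐ⁾)) ≤ L(1) aᵐ bⁿ⁻ᵐ`. Expanding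
`(x + (-y))ⁿ` by the binomial theorem and summing these bounds gives `L(1) (a + b)ⁿ`.
-/

open MvPolynomial

namespace LinearMap

variable {A : Type*} [CommSemiring A] [Algebra ℝ A] (L : A →ₗ[ℝ] ℝ)

theorem map_mul_sq_le (hsq : ∀ h : A, 0 ≤ L (h ^ 2)) (p q : A) :
    L (p * q) ^ 2 ≤ L (p ^ 2) * L (q ^ 2) := by
  have hquad : ∀ t : ℝ, 0 ≤ L (q ^ 2) * (t * t) + 2 * L (p * q) * t + L (p ^ 2) := by
    intro t
    have hexpand : (t • q + p) ^ 2 = (t * t) • q ^ 2 + (2 * t) • (p * q) + p ^ 2 := by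
      simp only [Algebra.smul_def, map_mul, map_ofNat]
      ring
    have := hsq (t • q + p)
    rw [hexpand, map_add, map_add, map_smul, map_smul, smul_eq_mul, smul_eq_mul] at this
    linarith
  have := discrim_le_zero hquad
  rw [discrim] at this
  nlinarith

theorem abs_map_mul_le (hsq : ∀ h : A, 0 ≤ L (h ^ 2)) {p q : A} {s t : ℝ} (hs : 0 ≤ s)
    (ht : 0 ≤ t) (hp : L (p ^ 2) ≤ L 1 * s ^ 2) (hq : L (q ^ 2) ≤ L 1 * t ^ 2) :
    |L (p * q)| ≤ L 1 * (s * t) := by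
  have hL1 : 0 ≤ L 1 := by simpa using hsq 1
  refine abs_le_of_sq_le_sq ?_ (by positivity)
  calc L (p * q) ^ 2 ≤ L (p ^ 2) * L (q ^ 2) := L.map_mul_sq_le hsq p q
    _ ≤ (L 1 * s ^ 2) * (L 1 * t ^ 2) := mul_le_mul hp hq (hsq q) (by positivity)
    _ = (L 1 * (s * t)) ^ 2 := by ring

theorem abs_map_add_pow_le (hsq : ∀ h : A, 0 ≤ L (h ^ 2)) {p q : A} {s t : ℝ} (hs : 0 ≤ s)
    (ht : 0 ≤ t) (hp : ∀ k : ℕ, L (p ^ (2 * k)) ≤ L 1 * s ^ (2 * k))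
    (hq : ∀ k : ℕ, L (q ^ (2 * k)) ≤ L 1 * t ^ (2 * k)) (n : ℕ) :
    |L ((p + q) ^ n)| ≤ L 1 * (s + t) ^ n := by
  have hterm (m : ℕ) : |L (p ^ m * q ^ (n - m))| ≤ L 1 * (s ^ m * t ^ (n - m)) := by
    refine L.abs_map_mul_le hsq (pow_nonneg hs m) (pow_nonneg ht (n - m)) ?_ ?_
    · simpa only [← pow_mul, mul_comm m] using hp m
    · simpa only [← pow_mul, mul_comm (n - m)] using hq (n - m)
  simp only [add_pow, map_sum, Finset.mul_sum]
  refine (Finset.abs_sum_le_sum_abs _ _).trans (Finset.sum_le_sum fun m _ => ?_)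
  rw [mul_comm _ (n.choose m : A), ← nsmul_eq_mul, map_nsmul, nsmul_eq_mul, abs_mul,
    Nat.abs_cast]
  calc (n.choose m : ℝ) * |L (p ^ m * q ^ (n - m))|
      ≤ n.choose m * (L 1 * (s ^ m * t ^ (n - m))) := by gcongr; exact hterm m
    _ = L 1 * (s ^ m * t ^ (n - m) * n.choose m) := by ring

end LinearMap

theorem binomial_moment_bound (L : MvPolynomial (Fin 2) ℝ →ₗ[ℝ] ℝ)
    (a b : ℝ) (ha : 0 ≤ a) (hb : 0 ≤ b)
    (hsq : ∀ h : MvPolynomial (Fin 2) ℝ, 0 ≤ L (h ^ 2))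
    (hx : ∀ k : ℕ, L ((X 0) ^ (2 * k)) ≤ L 1 * a ^ (2 * k))
    (hy : ∀ k : ℕ, L ((X 1) ^ (2 * k)) ≤ L 1 * b ^ (2 * k)) :
    ∀ n : ℕ, |L ((X 0 - X 1) ^ n)| ≤ L 1 * (a + b) ^ n := by
  have hy_neg (k : ℕ) : L ((-X 1) ^ (2 * k)) ≤ L 1 * b ^ (2 * k) := by
    simpa only [(even_two_mul k).neg_pow] using hy k
  intro n
  simpa only [sub_eq_add_neg] using L.abs_map_add_pow_le hsq ha hb hx hy_neg n
end

section
/- For every n ∈ ℕ and real numbers t₁, …, tₙ, the polarization identity holds: n! · t₁⋯tₙ = (1/2ⁿ) · ∑_{ε ∈ {−1,1}ⁿ} (∏ᵢ εᵢ) · (∑ᵢ εᵢ tᵢ)ⁿ. -/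
/-!
Expanding the `n`-th power gives one monomial `∏ₖ t (g k)` for each map `g : Fin n → ι`.
Weighting by the character `∏ᵢ εᵢ` and summing over all signs kills every monomial that misses
some variable `tᵢ` (the sum over `εᵢ` alone is `1 + (-1) = 0`) and gives `2ⁿ` for each of the
`n!` bijections `g`.
-/

open Finset Function

section

variable {R : Type*}

def boolSign [One R] [Neg R] (b : Bool) : R := if b then 1 else -1

theorem sum_boolSign_pow [Ring R] (m : ℕ) :
    ∑ b : Bool, (boolSign b : R) ^ m = if Even m then 2 else 0 := by
  rcases Nat.even_or_odd m with h | h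
  · simp [boolSign, h, h.neg_one_pow, one_add_one_eq_two]
  · simp [boolSign, Nat.not_even_iff_odd.2 h, h.neg_one_pow]

variable {ι κ : Type*} [Fintype ι] [Fintype κ]

theorem sum_prod_boolSign_pow [CommRing R] [DecidableEq ι] (m : ι → ℕ) :
    ∑ ε : ι → Bool, ∏ i, (boolSign (ε i) : R) ^ m i = ∏ i, if Even (m i) then 2 else 0 := by
  rw [← Fintype.prod_sum fun i b => (boolSign b : R) ^ m i]
  exact prod_congr rfl fun i _ => sum_boolSign_pow (m i)

theorem prod_boolSign_mul_prod_comp_eq_one [CommRing R] {g : κ → ι} (hg : Bijective g)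
    (ε : ι → Bool) : (∏ i, (boolSign (ε i) : R)) * ∏ k, boolSign (ε (g k)) = 1 := by
  rw [hg.prod_comp (fun i => (boolSign (ε i) : R)), ← prod_mul_distrib]
  exact prod_eq_one fun i _ => by cases ε i <;> simp [boolSign]

theorem sum_prod_boolSign_mul_prod_comp_of_not_surjective [CommRing R] [DecidableEq ι]
    {g : κ → ι} (hg : ¬ Surjective g) :
    ∑ ε : ι → Bool, (∏ i, (boolSign (ε i) : R)) * ∏ k, boolSign (ε (g k)) = 0 := by
  obtain ⟨i₀, hi₀⟩ := not_forall.1 hg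
  have hfiber : #{k | g k = i₀} = 0 := by
    simpa [filter_eq_empty_iff] using hi₀
  calc ∑ ε : ι → Bool, (∏ i, (boolSign (ε i) : R)) * ∏ k, boolSign (ε (g k))
      = ∑ ε : ι → Bool, ∏ i, (boolSign (ε i) : R) ^ (#{k | g k = i} + 1) := by
        refine sum_congr rfl fun ε _ => ?_
        rw [← prod_fiberwise' univ g fun i => (boolSign (ε i) : R), ← prod_mul_distrib]
        exact prod_congr rfl fun i _ => by rw [prod_const, pow_succ']
    _ = 0 := by
        rw [sum_prod_boolSign_pow]
        exact prod_eq_zero (mem_univ i₀) (by simp [hfiber])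

theorem sum_prod_boolSign_mul_prod_comp [CommRing R] [DecidableEq ι]
    (hcard : Fintype.card κ = Fintype.card ι) (g : κ → ι) :
    ∑ ε : ι → Bool, (∏ i, (boolSign (ε i) : R)) * ∏ k, boolSign (ε (g k)) =
      if Bijective g then 2 ^ Fintype.card ι else 0 := by
  split_ifs with hg
  · simp [prod_boolSign_mul_prod_comp_eq_one hg]
  · refine sum_prod_boolSign_mul_prod_comp_of_not_surjective fun hs => hg ?_
    exact (Fintype.bijective_iff_surjective_and_card g).2 ⟨hs, hcard⟩

theorem sum_ite_bijective_prod_comp [CommSemiring R] [DecidableEq ι] [DecidableEq κ]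
    (hcard : Fintype.card κ = Fintype.card ι) (t : ι → R) :
    ∑ g : κ → ι, (if Bijective g then ∏ k, t (g k) else 0) =
      (Fintype.card ι).factorial * ∏ i, t i := by
  calc ∑ g : κ → ι, (if Bijective g then ∏ k, t (g k) else 0)
      = ∑ g : {g : κ → ι // Bijective g}, ∏ k, t (g.1 k) := by
        rw [← sum_filter]
        exact sum_subtype _ (by simp) _
    _ = ∑ e : κ ≃ ι, ∏ k, t (e k) := Fintype.sum_equiv Equiv.bijectiveEquiv _ _ fun _ => rfl
    _ = (Fintype.card ι).factorial * ∏ i, t i := by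
        simp [Equiv.prod_comp, Fintype.card_equiv (Fintype.equivOfCardEq hcard), hcard]

theorem sum_prod_boolSign_mul_sum_pow_card [CommRing R] [DecidableEq ι] (t : ι → R) :
    ∑ ε : ι → Bool, (∏ i, (boolSign (ε i) : R)) * (∑ i, boolSign (ε i) * t i) ^ Fintype.card ι =
      2 ^ Fintype.card ι * (Fintype.card ι).factorial * ∏ i, t i := by
  have hcard := Fintype.card_fin (Fintype.card ι)
  calc ∑ ε : ι → Bool,
        (∏ i, (boolSign (ε i) : R)) * (∑ i, boolSign (ε i) * t i) ^ Fintype.card ι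
      = ∑ ε : ι → Bool, ∑ g : Fin (Fintype.card ι) → ι,
          (∏ k, t (g k)) * ((∏ i, (boolSign (ε i) : R)) * ∏ k, boolSign (ε (g k))) := by
        simp_rw [Fintype.sum_pow, mul_sum, prod_mul_distrib]
        exact sum_congr rfl fun _ _ => sum_congr rfl fun _ _ => by ring
    _ = ∑ g : Fin (Fintype.card ι) → ι, (∏ k, t (g k)) *
          ∑ ε : ι → Bool, (∏ i, (boolSign (ε i) : R)) * ∏ k, boolSign (ε (g k)) := by
        rw [sum_comm]
        simp_rw [mul_sum]
    _ = 2 ^ Fintype.card ι * ∑ g : Fin (Fintype.card ι) → ι,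
          (if Bijective g then ∏ k, t (g k) else 0) := by
        simp_rw [sum_prod_boolSign_mul_prod_comp hcard, mul_sum, mul_ite, mul_zero,
          mul_comm]
    _ = 2 ^ Fintype.card ι * (Fintype.card ι).factorial * ∏ i, t i := by
        rw [sum_ite_bijective_prod_comp hcard, mul_assoc]

end

theorem polarization_identity (n : ℕ) (t : Fin n → ℝ) :
    (n.factorial : ℝ) * ∏ i, t i =
      (1 / 2 ^ n) * ∑ ε : Fin n → Bool,
        (∏ i, (if ε i then (1 : ℝ) else -1)) *
          (∑ i, (if ε i then (1 : ℝ) else -1) * t i) ^ n := by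
  have h := sum_prod_boolSign_mul_sum_pow_card t
  rw [Fintype.card_fin] at h
  simp only [boolSign] at h
  rw [h]
  field_simp
end
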